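/- arXiv:2111.14430 — 2 statements merged into one kernel-verified Lean document; each statement's English description precedes it below -/
import Mathlib

section
/- For every y ∈ ℝ₊^{2m+1}, the minimum of the original problem equals the minimum of the lifted double minimization: min over x ∈ ℝ₊^{m+1} of I(y‖x*x) equals the infimum over Y ∈ 𝒴 and x ∈ ℝ₊^{m+1} of I(Y‖W(x)) (both values taken in [0,∞], the first minimum being attained). -/
open Finset Filter

/-- Extension of `x : Fin (m+1) → ℝ` to `ℕ`, zero outside `[0, m]`. -/
def ext (m : ℕ) (x : Fin (m + 1) → ℝ) (k : ℕ) : ℝ :=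
  if h : k < m + 1 then x ⟨k, h⟩ else 0

/-- Autoconvolution `(x*x)_i = ∑_{j=0}^{i} x_{i-j} x_j`. -/
def aconv (m : ℕ) (x : Fin (m + 1) → ℝ) : Fin (2 * m + 1) → ℝ :=
  fun i => ∑ j ∈ Finset.range (i.1 + 1), ext m x (i.1 - j) * ext m x j

/-- The index `ℓ + j ∈ {0,…,2m}` for `ℓ, j ∈ {0,…,m}`. -/
def idx (m : ℕ) (ℓ j : Fin (m + 1)) : Fin (2 * m + 1) :=
  ⟨ℓ.1 + j.1, by have h1 := ℓ.isLt; have h2 := j.isLt; omega⟩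

/-- One term of the I-divergence, with values in `[0,∞]`, with the conventions
`0·log(0/b) = 0` and value `∞` if `a > 0 = b`. -/
noncomputable def termDiv (a b : ℝ) : ENNReal :=
  if a = 0 then ENNReal.ofReal b
  else if b = 0 then ⊤
  else ENNReal.ofReal (a * Real.log (a / b) - a + b)

/-- `[0,∞]`-valued I-divergence between vectors. -/
noncomputable def Idiv {n : ℕ} (u v : Fin n → ℝ) : ENNReal :=
  ∑ i, termDiv (u i) (v i)

/-- Real-valued I-divergence between vectors (used when the second argument is
positive wherever the first one is). -/
noncomputable def IdivR {n : ℕ} (u v : Fin n → ℝ) : ℝ :=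
  ∑ i, (u i * Real.log (u i / v i) - u i + v i)

/-- `[0,∞]`-valued I-divergence between `(2m+1) × (m+1)` matrices. -/
noncomputable def IdivM (m : ℕ) (M N : Fin (2 * m + 1) → Fin (m + 1) → ℝ) : ENNReal :=
  ∑ i, ∑ j, termDiv (M i j) (N i j)

/-- Real-valued I-divergence between `(2m+1) × (m+1)` matrices. -/
noncomputable def IdivMR (m : ℕ) (M N : Fin (2 * m + 1) → Fin (m + 1) → ℝ) : ℝ :=
  ∑ i, ∑ j, (M i j * Real.log (M i j / N i j) - M i j + N i j)

/-- The set 𝒴: nonnegative matrices supported on `{(i,j) : j ≤ i ≤ j+m}` with row sums `y`. -/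
def calY (m : ℕ) (y : Fin (2 * m + 1) → ℝ) (Y : Fin (2 * m + 1) → Fin (m + 1) → ℝ) : Prop :=
  (∀ i j, 0 ≤ Y i j) ∧
  (∀ (i : Fin (2 * m + 1)) (j : Fin (m + 1)), ¬(j.1 ≤ i.1 ∧ i.1 ≤ j.1 + m) → Y i j = 0) ∧
  (∀ i, ∑ j, Y i j = y i)

/-- The matrix `W(x)` with `W(x)_{ij} = x_{i-j} x_j` on the support and `0` elsewhere. -/
def Wmat (m : ℕ) (x : Fin (m + 1) → ℝ) (i : Fin (2 * m + 1)) (j : Fin (m + 1)) : ℝ :=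
  if h : j.1 ≤ i.1 ∧ i.1 ≤ j.1 + m then x ⟨i.1 - j.1, by omega⟩ * x j else 0

/-- The matrix `Y*(x)` with `Y*(x)_{ij} = (x_{i-j} x_j/(x*x)_i)·y_i` on the support. -/
noncomputable def Ystar (m : ℕ) (y : Fin (2 * m + 1) → ℝ) (x : Fin (m + 1) → ℝ)
    (i : Fin (2 * m + 1)) (j : Fin (m + 1)) : ℝ :=
  if h : j.1 ≤ i.1 ∧ i.1 ≤ j.1 + m then
    x ⟨i.1 - j.1, by omega⟩ * x j / aconv m x i * y i
  else 0

/-- `Ŷ_j = ∑_{i=0}^{m} Y_{i+j,i} + ∑_{i=j}^{j+m} Y_{ij}`. -/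
def Yhat (m : ℕ) (Y : Fin (2 * m + 1) → Fin (m + 1) → ℝ) (j : Fin (m + 1)) : ℝ :=
  (∑ ℓ : Fin (m + 1), Y (idx m ℓ j) ℓ) + ∑ ℓ : Fin (m + 1), Y (idx m ℓ j) j

/-- The algorithm map `T(x)_j = x_j (1/c) ∑_ℓ x_ℓ y_{ℓ+j}/(x*x)_{ℓ+j}`,
with `c = √(∑ y_i)`. -/
noncomputable def Tmap (m : ℕ) (y : Fin (2 * m + 1) → ℝ) (x : Fin (m + 1) → ℝ)
    (j : Fin (m + 1)) : ℝ :=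
  x j * (1 / Real.sqrt (∑ i, y i)) * ∑ ℓ, x ℓ * y (idx m ℓ j) / aconv m x (idx m ℓ j)

/-- The gradient `∇_j I(x) = 2 ∑_ℓ ( x_ℓ − x_ℓ y_{ℓ+j}/(x*x)_{ℓ+j} )`. -/
noncomputable def gradI (m : ℕ) (y : Fin (2 * m + 1) → ℝ) (x : Fin (m + 1) → ℝ)
    (j : Fin (m + 1)) : ℝ :=
  2 * ∑ ℓ, (x ℓ - x ℓ * y (idx m ℓ j) / aconv m x (idx m ℓ j))

/-!
For fixed `x`, the rows of any `Y ∈ 𝒴` and of `W(x)` sum to `y` and to `x * x`. The log-sum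
inequality (Jensen's inequality for the perspective of `klFun t = t log t + 1 - t`) therefore gives
`I(y‖x*x) ≤ I(Y‖W(x))` row by row, with equality at `Y = Y*(x)`, whose rows are proportional to
those of `W(x)`, as soon as `I(y‖x*x)` is finite. The infimum of `x ↦ I(y‖x*x)` is attained
because this map is continuous into `[0, ∞]` on the closed orthant and coercive, as
`(x*x)_{2j} ≥ x_j ^ 2` and `I(a‖b) ≥ b / 2 - a`.
-/

open InformationTheory Topology

section termDiv

variable {a b t : ℝ}

lemma termDiv_zero_left (b : ℝ) : termDiv 0 b = ENNReal.ofReal b := if_pos rfl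

lemma termDiv_eq_top_iff : termDiv a b = ⊤ ↔ a ≠ 0 ∧ b = 0 := by
  unfold termDiv
  split_ifs <;> simp_all

lemma termDiv_mul_self (ht : 0 ≤ t) (hb : 0 ≤ b) :
    termDiv (t * b) b = ENNReal.ofReal (b * klFun t) := by
  rcases hb.eq_or_lt with rfl | hb
  · simp [termDiv_zero_left]
  rcases ht.eq_or_lt with rfl | ht
  · simp [termDiv_zero_left, klFun_zero]
  rw [termDiv, if_neg (by positivity), if_neg hb.ne', mul_div_cancel_right₀ _ hb.ne', klFun_apply]
  ring_nf

lemma termDiv_eq_mul_klFun (ha : 0 ≤ a) (hb : 0 ≤ b) (hab : b = 0 → a = 0) :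
    termDiv a b = ENNReal.ofReal (b * klFun (a / b)) := by
  simpa only [div_mul_cancel_of_imp hab] using termDiv_mul_self (div_nonneg ha hb) hb

lemma neg_half_le_mul_log (ht : 0 ≤ t) : -(1 / 2) ≤ t * Real.log t := by
  rcases ht.eq_or_lt with rfl | ht
  · norm_num
  have h := Real.self_sub_one_le_mul_log (by positivity : 0 ≤ 2 * t)
  rw [Real.log_mul two_ne_zero ht.ne'] at h
  nlinarith [Real.log_two_lt_d9]

lemma ofReal_half_sub_le_termDiv (ha : 0 ≤ a) (hb : 0 ≤ b) :
    ENNReal.ofReal (b / 2 - a) ≤ termDiv a b := by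
  by_cases hab : b = 0 → a = 0
  · rw [termDiv_eq_mul_klFun ha hb hab, klFun_apply]
    refine ENNReal.ofReal_le_ofReal ?_
    have := neg_half_le_mul_log (div_nonneg ha hb)
    have hba : b * (a / b) = a := mul_div_cancel_of_imp' hab
    nlinarith
  · rw [termDiv_eq_top_iff.2 (Classical.not_imp.1 hab).symm]
    exact le_top

lemma tendsto_termDiv_nhdsGT_zero (ha : 0 < a) :
    Tendsto (termDiv a) (𝓝[>] 0) (𝓝 ⊤) := by
  have hlog : Tendsto (fun c => a * Real.log (a * c⁻¹) - a) (𝓝[>] 0) atTop :=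
    tendsto_atTop_add_const_right _ _ <| Tendsto.const_mul_atTop ha <|
      Real.tendsto_log_atTop.comp (tendsto_inv_nhdsGT_zero.const_mul_atTop ha)
  refine tendsto_nhds_top_mono (ENNReal.tendsto_ofReal_atTop.comp hlog) ?_
  filter_upwards [self_mem_nhdsWithin] with c (hc : 0 < c)
  rw [termDiv, if_neg ha.ne', if_neg hc.ne', Function.comp_apply, ← div_eq_mul_inv]
  exact ENNReal.ofReal_le_ofReal (by linarith)

lemma continuousOn_termDiv (ha : 0 ≤ a) : ContinuousOn (termDiv a) (Set.Ici 0) := by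
  rcases ha.eq_or_lt with rfl | ha
  · simpa only [funext termDiv_zero_left] using ENNReal.continuous_ofReal.continuousOn
  intro b hb
  rcases (Set.mem_Ici.1 hb).eq_or_lt with rfl | hb
  · rw [← Set.Ioi_insert, continuousWithinAt_insert_self, ContinuousWithinAt,
      termDiv_eq_top_iff.2 ⟨ha.ne', rfl⟩]
    exact tendsto_termDiv_nhdsGT_zero ha
  · have heq : (fun c => ENNReal.ofReal (c * klFun (a / c))) =ᶠ[𝓝 b] termDiv a := by
      filter_upwards [eventually_gt_nhds hb] with c hc
      exact (termDiv_eq_mul_klFun ha.le hc.le fun h => absurd h hc.ne').symm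
    refine ContinuousAt.continuousWithinAt (ContinuousAt.congr ?_ heq)
    exact ENNReal.continuous_ofReal.continuousAt.comp <| continuousAt_id.mul <|
      continuous_klFun.continuousAt.comp (continuousAt_const.div continuousAt_id hb.ne')

end termDiv

section LogSum

variable {ι : Type*} [Fintype ι] {a b : ι → ℝ}

lemma sum_mul_klFun_div_le (ha : ∀ j, 0 ≤ a j) (hb : ∀ j, 0 ≤ b j)
    (hab : ∀ j, b j = 0 → a j = 0) :
    (∑ j, b j) * klFun ((∑ j, a j) / ∑ j, b j) ≤ ∑ j, b j * klFun (a j / b j) := by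
  rcases (sum_nonneg fun j _ => hb j : 0 ≤ ∑ j, b j).eq_or_lt with hB | hB
  · rw [← hB, zero_mul]
    exact sum_nonneg fun j _ => mul_nonneg (hb j) (klFun_nonneg (div_nonneg (ha j) (hb j)))
  have jensen := convexOn_klFun.map_sum_le (t := univ) (w := fun j => b j / ∑ j, b j)
    (p := fun j => a j / b j) (fun j _ => div_nonneg (hb j) hB.le)
    (by rw [← sum_div, div_self hB.ne'])
    (fun j _ => Set.mem_Ici.2 (div_nonneg (ha j) (hb j)))
  simp only [smul_eq_mul, div_mul_eq_mul_div _ (∑ j, b j), mul_div_cancel_of_imp' (hab _),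
    ← sum_div] at jensen
  rwa [le_div_iff₀' hB] at jensen

lemma termDiv_sum_le_sum_termDiv (ha : ∀ j, 0 ≤ a j) (hb : ∀ j, 0 ≤ b j) :
    termDiv (∑ j, a j) (∑ j, b j) ≤ ∑ j, termDiv (a j) (b j) := by
  by_cases hab : ∀ j, b j = 0 → a j = 0
  · have hAB : ∑ j, b j = 0 → ∑ j, a j = 0 := fun h =>
      sum_eq_zero fun j _ => hab j ((sum_eq_zero_iff_of_nonneg fun j _ => hb j).1 h j (mem_univ j))
    rw [termDiv_eq_mul_klFun (sum_nonneg fun j _ => ha j) (sum_nonneg fun j _ => hb j) hAB,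
      sum_congr rfl fun j _ => termDiv_eq_mul_klFun (ha j) (hb j) (hab j),
      ← ENNReal.ofReal_sum_of_nonneg fun j _ =>
        mul_nonneg (hb j) (klFun_nonneg (div_nonneg (ha j) (hb j)))]
    exact ENNReal.ofReal_le_ofReal (sum_mul_klFun_div_le ha hb hab)
  · push Not at hab
    obtain ⟨j, hbj, haj⟩ := hab
    rw [ENNReal.sum_eq_top.2 ⟨j, mem_univ j, termDiv_eq_top_iff.2 ⟨haj, hbj⟩⟩]
    exact le_top

end LogSum

section Autoconvolution

variable {m : ℕ} {x : Fin (m + 1) → ℝ}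

lemma Wmat_nonneg (hx : ∀ j, 0 ≤ x j) (i : Fin (2 * m + 1)) (j : Fin (m + 1)) :
    0 ≤ Wmat m x i j := by
  unfold Wmat
  split_ifs
  exacts [mul_nonneg (hx _) (hx _), le_rfl]

lemma sum_Wmat (i : Fin (2 * m + 1)) :
    ∑ j, Wmat m x i j = aconv m x i := by
  set g : ℕ → ℝ := fun j => if j ≤ i.1 then ext m x (i.1 - j) * ext m x j else 0
  have hg : ∀ j, i.1 + 1 ≤ j ∨ m + 1 ≤ j → g j = 0 := by
    intro j hj
    by_cases hji : j ≤ i.1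
    · have hjm : ¬j < m + 1 := by omega
      simp only [g, if_pos hji, _root_.ext, dif_neg hjm, mul_zero]
    · exact if_neg hji
  calc ∑ j, Wmat m x i j = ∑ j ∈ range (m + 1), g j := by
        rw [← Fin.sum_univ_eq_sum_range]
        refine sum_congr rfl fun j _ => ?_
        simp only [Wmat, g, _root_.ext]
        split_ifs <;> first | rfl | omega | simp
    _ = ∑ j ∈ range (i.1 + 1 + (m + 1)), g j :=
        (eventually_constant_sum (fun j hj => hg j (Or.inr hj)) (by omega)).symm
    _ = ∑ j ∈ range (i.1 + 1), g j :=
        eventually_constant_sum (fun j hj => hg j (Or.inl hj)) (by omega)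
    _ = aconv m x i := sum_congr rfl fun j hj => if_pos (by simpa [Nat.lt_succ_iff] using hj)

lemma aconv_nonneg (hx : ∀ j, 0 ≤ x j) (i : Fin (2 * m + 1)) : 0 ≤ aconv m x i :=
  sum_Wmat i ▸ sum_nonneg fun j _ => Wmat_nonneg hx i j

lemma mul_self_le_aconv (hx : ∀ j, 0 ≤ x j) (j : Fin (m + 1)) :
    x j * x j ≤ aconv m x (idx m j j) := by
  rw [← sum_Wmat]
  have hW : Wmat m x (idx m j j) j = x j * x j := by
    rw [Wmat, dif_pos (by simp only [idx]; omega)]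
    simp [idx]
  exact hW ▸ single_le_sum (fun k _ => Wmat_nonneg hx (idx m j j) k) (mem_univ j)

lemma aconv_one_pos (i : Fin (2 * m + 1)) : 0 < aconv m 1 i := by
  rw [← sum_Wmat]
  have hi := i.isLt
  refine sum_pos' (fun j _ => Wmat_nonneg (fun _ => zero_le_one) i j)
    ⟨⟨i.1 - m, by omega⟩, mem_univ _, ?_⟩
  rw [Wmat, dif_pos (by dsimp only; omega)]
  norm_num

lemma continuous_aconv (i : Fin (2 * m + 1)) :
    Continuous fun x : Fin (m + 1) → ℝ => aconv m x i := by
  simp only [← sum_Wmat]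
  refine continuous_finsetSum _ fun j _ => ?_
  unfold Wmat
  split_ifs <;> fun_prop

end Autoconvolution

section Lifting

variable {m : ℕ} {y : Fin (2 * m + 1) → ℝ} {x : Fin (m + 1) → ℝ}

lemma Idiv_eq_top_iff {n : ℕ} {u v : Fin n → ℝ} : Idiv u v = ⊤ ↔ ∃ i, u i ≠ 0 ∧ v i = 0 := by
  simp [Idiv, ENNReal.sum_eq_top, termDiv_eq_top_iff]

lemma Idiv_aconv_le_IdivM {Y : Fin (2 * m + 1) → Fin (m + 1) → ℝ} (hY : calY m y Y)
    (hx : ∀ j, 0 ≤ x j) : Idiv y (aconv m x) ≤ IdivM m Y (Wmat m x) := by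
  refine sum_le_sum fun i _ => ?_
  have h := termDiv_sum_le_sum_termDiv (hY.1 i) (Wmat_nonneg hx i)
  rwa [hY.2.2 i, sum_Wmat] at h

lemma Ystar_eq (i : Fin (2 * m + 1)) (j : Fin (m + 1)) :
    Ystar m y x i j = y i / aconv m x i * Wmat m x i j := by
  unfold Ystar Wmat
  split_ifs
  exacts [by ring, (mul_zero _).symm]

lemma Ystar_mem_calY (hy : ∀ i, 0 ≤ y i) (hx : ∀ j, 0 ≤ x j)
    (hpos : ∀ i, aconv m x i = 0 → y i = 0) : calY m y (Ystar m y x) := by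
  refine ⟨fun i j => ?_, fun i j h => dif_neg h, fun i => ?_⟩
  · rw [Ystar_eq]
    exact mul_nonneg (div_nonneg (hy i) (aconv_nonneg hx i)) (Wmat_nonneg hx i j)
  · simp only [Ystar_eq, ← mul_sum, sum_Wmat, div_mul_cancel_of_imp (hpos i)]

lemma IdivM_Ystar_Wmat (hy : ∀ i, 0 ≤ y i) (hx : ∀ j, 0 ≤ x j)
    (hpos : ∀ i, aconv m x i = 0 → y i = 0) :
    IdivM m (Ystar m y x) (Wmat m x) = Idiv y (aconv m x) := by
  refine sum_congr rfl fun i _ => ?_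
  have ht : 0 ≤ y i / aconv m x i := div_nonneg (hy i) (aconv_nonneg hx i)
  simp only [Ystar_eq, termDiv_mul_self ht (Wmat_nonneg hx i _)]
  rw [← ENNReal.ofReal_sum_of_nonneg fun j _ => mul_nonneg (Wmat_nonneg hx i j) (klFun_nonneg ht),
    ← sum_mul, sum_Wmat, ← termDiv_mul_self ht (aconv_nonneg hx i),
    div_mul_cancel_of_imp (hpos i)]

end Lifting

section Minimizer

variable {m : ℕ} {y : Fin (2 * m + 1) → ℝ}

lemma continuousOn_Idiv_aconv (hy : ∀ i, 0 ≤ y i) :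
    ContinuousOn (fun x => Idiv y (aconv m x)) {x | ∀ j, 0 ≤ x j} :=
  continuousOn_finsetSum _ fun i _ => (continuousOn_termDiv (hy i)).comp
    (continuous_aconv i).continuousOn fun _ hx => Set.mem_Ici.2 (aconv_nonneg hx i)

lemma ofReal_sub_le_Idiv_aconv (hy : ∀ i, 0 ≤ y i) {x : Fin (m + 1) → ℝ} (hx : ∀ j, 0 ≤ x j)
    (j : Fin (m + 1)) : ENNReal.ofReal (x j * x j / 2 - ∑ i, y i) ≤ Idiv y (aconv m x) :=
  calc ENNReal.ofReal (x j * x j / 2 - ∑ i, y i)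
      ≤ ENNReal.ofReal (aconv m x (idx m j j) / 2 - y (idx m j j)) := by
        refine ENNReal.ofReal_le_ofReal ?_
        have := single_le_sum (fun i _ => hy i) (mem_univ (idx m j j))
        linarith [mul_self_le_aconv hx j]
    _ ≤ termDiv (y (idx m j j)) (aconv m x (idx m j j)) :=
        ofReal_half_sub_le_termDiv (hy _) (aconv_nonneg hx _)
    _ ≤ Idiv y (aconv m x) :=
        single_le_sum (f := fun i => termDiv (y i) (aconv m x i)) (fun _ _ => zero_le)
          (mem_univ _)

lemma exists_isMinOn_Idiv_aconv (hy : ∀ i, 0 ≤ y i) :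
    ∃ xs ∈ {x : Fin (m + 1) → ℝ | ∀ j, 0 ≤ x j},
      IsMinOn (fun x => Idiv y (aconv m x)) {x | ∀ j, 0 ≤ x j} xs := by
  have hclosed : IsClosed {x : Fin (m + 1) → ℝ | ∀ j, 0 ≤ x j} := isClosed_Ici (a := 0)
  have hone : (1 : Fin (m + 1) → ℝ) ∈ {x | ∀ j, 0 ≤ x j} := fun _ => zero_le_one
  refine (continuousOn_Idiv_aconv hy).exists_isMinOn' hclosed hone ?_
  set M := (Idiv y (aconv m 1)).toReal
  have hM : Idiv y (aconv m 1) = ENNReal.ofReal M :=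
    (ENNReal.ofReal_toReal (Idiv_eq_top_iff.not.2 fun ⟨i, _, hi⟩ =>
      (aconv_one_pos i).ne' hi)).symm
  set R := 2 * (M + ∑ i, y i) + 1
  have hR : 0 < R := by
    have : 0 ≤ ∑ i, y i := sum_nonneg fun i _ => hy i
    positivity
  filter_upwards [(tendsto_norm_cocompact_atTop.eventually_ge_atTop R).filter_mono inf_le_left,
    mem_inf_of_right (mem_principal_self _)] with x hxR hx
  obtain ⟨j, hj⟩ : ∃ j, R ≤ x j := by
    by_contra! h
    exact hxR.not_gt ((pi_norm_lt_iff hR).2 fun j => by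
      rw [Real.norm_of_nonneg (hx j)]; exact h j)
  refine hM ▸ le_trans (ENNReal.ofReal_le_ofReal ?_) (ofReal_sub_le_Idiv_aconv hy hx j)
  nlinarith [ENNReal.toReal_nonneg (a := Idiv y (aconv m 1))]

end Minimizer

/-- the (attained) minimum of the original problem equals the
infimum of the lifted double minimization. -/
theorem stmt8 (m : ℕ) (y : Fin (2 * m + 1) → ℝ) (hy : ∀ i, 0 ≤ y i) :
    ∃ xs : Fin (m + 1) → ℝ, (∀ j, 0 ≤ xs j) ∧
      (∀ x : Fin (m + 1) → ℝ, (∀ j, 0 ≤ x j) →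
        Idiv y (aconv m xs) ≤ Idiv y (aconv m x)) ∧
      Idiv y (aconv m xs) =
        ⨅ (Y : {Y : Fin (2 * m + 1) → Fin (m + 1) → ℝ // calY m y Y})
          (x : {x : Fin (m + 1) → ℝ // ∀ j, 0 ≤ x j}),
            IdivM m Y.1 (Wmat m x.1) := by
  obtain ⟨xs, hxs, hmin⟩ := exists_isMinOn_Idiv_aconv hy
  replace hmin : ∀ x : Fin (m + 1) → ℝ, (∀ j, 0 ≤ x j) →
      Idiv y (aconv m xs) ≤ Idiv y (aconv m x) := isMinOn_iff.1 hmin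
  refine ⟨xs, hxs, hmin, le_antisymm ?_ ?_⟩
  · refine le_iInf fun Y => le_iInf fun x => ?_
    exact (hmin x.1 x.2).trans (Idiv_aconv_le_IdivM Y.2 x.2)
  · by_cases hpos : ∀ i, aconv m xs i = 0 → y i = 0
    · rw [← IdivM_Ystar_Wmat hy hxs hpos]
      exact iInf_le_of_le ⟨Ystar m y xs, Ystar_mem_calY hy hxs hpos⟩ <|
        iInf_le_of_le ⟨xs, hxs⟩ le_rfl
    · push Not at hpos
      obtain ⟨i, hz, hyi⟩ := hpos
      rw [Idiv_eq_top_iff.2 ⟨i, hyi, hz⟩]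
      exact le_top
end

section
/- Let y ∈ ℝ₊^{2m+1} have strictly positive components, let x ∈ ℝ^{m+1} be strictly positive, and set x' = T(x). Then I(y‖x*x) − I(y‖x'*x') = I(Y*(x)‖Y*(x')) + I(W(x')‖W(x)) ≥ 0; in particular the objective I(y‖x*x) does not increase under one step of the algorithm. -/
open Finset Filter

lemma ext_nonneg (m : ℕ) (x : Fin (m+1) → ℝ) (hx : ∀ j, 0 < x j) (k : ℕ) : 0 ≤ _root_.ext m x k := by
  unfold _root_.ext; split
  · exact (hx _).le
  · exact le_rfl

lemma aconv_pos (m : ℕ) (x : Fin (m+1) → ℝ) (hx : ∀ j, 0 < x j) (i : Fin (2*m+1)) :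
    0 < aconv m x i := by
  unfold aconv
  apply Finset.sum_pos'
  · intro j _; exact mul_nonneg (ext_nonneg m x hx _) (ext_nonneg m x hx _)
  · refine ⟨i.1 - m, by simp only [mem_range]; omega, ?_⟩
    have hi := i.isLt
    have h1 : i.1 - (i.1 - m) < m + 1 := by omega
    have h2 : i.1 - m < m + 1 := by omega
    unfold _root_.ext
    rw [dif_pos h1, dif_pos h2]
    exact mul_pos (hx _) (hx _)

lemma Wmat_row_sum (m : ℕ) (x : Fin (m+1) → ℝ) (i : Fin (2*m+1)) :
    ∑ j : Fin (m+1), Wmat m x i j = aconv m x i := by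
  have key : ∀ j : Fin (m+1), Wmat m x i j
      = (if j.1 ≤ i.1 ∧ i.1 ≤ j.1 + m then _root_.ext m x (i.1 - j.1) * _root_.ext m x j.1 else 0) := by
    intro j
    by_cases h : j.1 ≤ i.1 ∧ i.1 ≤ j.1 + m
    · rw [Wmat, dif_pos h, if_pos h]
      unfold _root_.ext
      rw [dif_pos (show i.1 - j.1 < m + 1 by omega), dif_pos j.isLt]
    · rw [Wmat, dif_neg h, if_neg h]
  calc ∑ j : Fin (m+1), Wmat m x i j
      = ∑ j ∈ range (m+1), (if j ≤ i.1 ∧ i.1 ≤ j + m then _root_.ext m x (i.1 - j) * _root_.ext m x j else 0) := by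
        rw [← Fin.sum_univ_eq_sum_range (fun j => if j ≤ i.1 ∧ i.1 ≤ j + m then _root_.ext m x (i.1 - j) * _root_.ext m x j else 0)]
        exact Finset.sum_congr rfl (fun j _ => key j)
    _ = ∑ j ∈ range (2*m+1), (if j ≤ i.1 ∧ i.1 ≤ j + m then _root_.ext m x (i.1 - j) * _root_.ext m x j else 0) := by
        apply Finset.sum_subset (Finset.range_subset_range.2 (by omega))
        intro j _ hj
        simp only [mem_range, not_lt] at hj
        split_ifs with h
        · have : _root_.ext m x j = 0 := by unfold _root_.ext; rw [dif_neg (by omega)]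
          rw [this, mul_zero]
        · rfl
    _ = ∑ j ∈ range (i.1+1), (if j ≤ i.1 ∧ i.1 ≤ j + m then _root_.ext m x (i.1 - j) * _root_.ext m x j else 0) := by
        symm
        apply Finset.sum_subset (Finset.range_subset_range.2 (by have := i.isLt; omega))
        intro j _ hj
        simp only [mem_range, not_lt] at hj
        rw [if_neg (by omega)]
    _ = aconv m x i := by
        unfold aconv
        apply Finset.sum_congr rfl
        intro j hj
        simp only [mem_range] at hj
        split_ifs with h
        · rfl
        · have : _root_.ext m x (i.1 - j) = 0 := by unfold _root_.ext; rw [dif_neg (by omega)]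
          rw [this, zero_mul]

lemma sum_col (m : ℕ) (j : Fin (m+1)) (F : Fin (2*m+1) → ℝ)
    (hF : ∀ i : Fin (2*m+1), ¬(j.1 ≤ i.1 ∧ i.1 ≤ j.1 + m) → F i = 0) :
    ∑ i, F i = ∑ ℓ : Fin (m+1), F (idx m ℓ j) := by
  have e1 : ∀ i : Fin (2*m+1), F i = (fun k => if h : k < 2*m+1 then F ⟨k,h⟩ else 0) i.1 := by
    intro i; simp [i.isLt]
  calc ∑ i, F i = ∑ k ∈ range (2*m+1), (if h : k < 2*m+1 then F ⟨k,h⟩ else 0) := by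
        rw [← Fin.sum_univ_eq_sum_range]
        exact Finset.sum_congr rfl (fun i _ => e1 i)
    _ = ∑ k ∈ Ico j.1 (j.1+m+1), (if h : k < 2*m+1 then F ⟨k,h⟩ else 0) := by
        symm
        apply Finset.sum_subset
        · intro k hk; simp only [mem_Ico] at hk; simp only [mem_range]; omega
        · intro k hk hk2
          simp only [mem_range] at hk
          simp only [mem_Ico, not_and, not_lt] at hk2
          rw [dif_pos hk]
          exact hF _ (by simp; omega)
    _ = ∑ k ∈ range (j.1+m+1 - j.1), (if h : j.1 + k < 2*m+1 then F ⟨j.1+k,h⟩ else 0) := by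
        rw [Finset.sum_Ico_eq_sum_range]
    _ = ∑ ℓ : Fin (m+1), F (idx m ℓ j) := by
        have : j.1+m+1 - j.1 = m+1 := by omega
        rw [this, ← Fin.sum_univ_eq_sum_range (fun k => if h : j.1 + k < 2*m+1 then F ⟨j.1+k,h⟩ else 0)]
        apply Finset.sum_congr rfl
        intro ℓ _
        rw [dif_pos (by have := ℓ.isLt; have := j.isLt; omega)]
        congr 1
        unfold idx
        exact Fin.ext (by simp [Nat.add_comm])

lemma idx_supp (m : ℕ) (ℓ j : Fin (m+1)) : j.1 ≤ (idx m ℓ j).1 ∧ (idx m ℓ j).1 ≤ j.1 + m := by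
  unfold idx; have := ℓ.isLt; constructor <;> simp <;> omega

lemma idx_sub (m : ℕ) (ℓ j : Fin (m+1)) (h : (idx m ℓ j).1 - j.1 < m + 1) :
    (⟨(idx m ℓ j).1 - j.1, h⟩ : Fin (m+1)) = ℓ := by
  apply Fin.ext; simp [idx]

lemma idx_comm (m : ℕ) (ℓ j : Fin (m+1)) : idx m ℓ j = idx m j ℓ := by
  apply Fin.ext; simp [idx, Nat.add_comm]

lemma Wmat_idx (m : ℕ) (x : Fin (m+1) → ℝ) (ℓ j : Fin (m+1)) :
    Wmat m x (idx m ℓ j) j = x ℓ * x j := by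
  rw [Wmat, dif_pos (idx_supp m ℓ j), idx_sub]

lemma Ystar_idx (m : ℕ) (y : Fin (2*m+1) → ℝ) (x : Fin (m+1) → ℝ) (ℓ j : Fin (m+1)) :
    Ystar m y x (idx m ℓ j) j = x ℓ * x j / aconv m x (idx m ℓ j) * y (idx m ℓ j) := by
  rw [Ystar, dif_pos (idx_supp m ℓ j), idx_sub]

lemma band_sum (m : ℕ) (G : Fin (2*m+1) → Fin (m+1) → ℝ)
    (hG : ∀ i j, ¬(j.1 ≤ i.1 ∧ i.1 ≤ j.1 + m) → G i j = 0) :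
    ∑ i, ∑ j, G i j = ∑ ℓ : Fin (m+1), ∑ j : Fin (m+1), G (idx m ℓ j) j := by
  rw [Finset.sum_comm]
  rw [show (∑ ℓ : Fin (m+1), ∑ j : Fin (m+1), G (idx m ℓ j) j)
      = ∑ j : Fin (m+1), ∑ ℓ : Fin (m+1), G (idx m ℓ j) j from Finset.sum_comm]
  exact Finset.sum_congr rfl fun j _ => sum_col m j (fun i => G i j) (fun i h => hG i j h)

lemma key1 (m : ℕ) (x : Fin (m+1) → ℝ) (g : Fin (2*m+1) → ℝ) :
    ∑ i, g i * aconv m x i = ∑ ℓ : Fin (m+1), ∑ j : Fin (m+1), g (idx m ℓ j) * (x ℓ * x j) := by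
  have : ∑ i, g i * aconv m x i = ∑ i, ∑ j : Fin (m+1), g i * Wmat m x i j := by
    refine Finset.sum_congr rfl fun i _ => ?_
    rw [← Wmat_row_sum, Finset.mul_sum]
  rw [this, band_sum m (fun i j => g i * Wmat m x i j)
      (fun i j h => by simp only [Wmat, dif_neg h, mul_zero])]
  exact Finset.sum_congr rfl fun ℓ _ => Finset.sum_congr rfl fun j _ => by rw [Wmat_idx]

lemma klein {a b : ℝ} (ha : 0 < a) (hb : 0 < b) : 0 ≤ a * Real.log (a/b) - a + b := by
  have h := Real.log_le_sub_one_of_pos (div_pos hb ha)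
  have h2 : Real.log (a/b) = - Real.log (b/a) := by rw [← Real.log_inv, inv_div]
  have h3 : a * (b/a) = b := by field_simp
  nlinarith [mul_le_mul_of_nonneg_left h ha.le]

noncomputable def Bfun (m : ℕ) (y : Fin (2 * m + 1) → ℝ) (x : Fin (m + 1) → ℝ)
    (ℓ j : Fin (m + 1)) : ℝ :=
  x ℓ * x j / aconv m x (idx m ℓ j) * y (idx m ℓ j)

lemma Bfun_pos (m : ℕ) (y : Fin (2*m+1) → ℝ) (x : Fin (m+1) → ℝ)
    (hy : ∀ i, 0 < y i) (hx : ∀ j, 0 < x j) (ℓ j : Fin (m+1)) : 0 < Bfun m y x ℓ j :=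
  mul_pos (div_pos (mul_pos (hx ℓ) (hx j)) (aconv_pos m x hx _)) (hy _)

lemma Bfun_symm (m : ℕ) (y : Fin (2*m+1) → ℝ) (x : Fin (m+1) → ℝ) (ℓ j : Fin (m+1)) :
    Bfun m y x ℓ j = Bfun m y x j ℓ := by
  rw [Bfun, Bfun, idx_comm]; ring

lemma lift (m : ℕ) (y : Fin (2*m+1) → ℝ) (x : Fin (m+1) → ℝ)
    (hy : ∀ i, 0 < y i) (hx : ∀ j, 0 < x j) :
    IdivR y (aconv m x) = ∑ ℓ : Fin (m+1), ∑ j : Fin (m+1),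
      (Bfun m y x ℓ j * Real.log (Bfun m y x ℓ j / (x ℓ * x j)) - Bfun m y x ℓ j + x ℓ * x j) := by
  have hs := aconv_pos m x hx
  calc IdivR y (aconv m x)
      = ∑ i, (fun i => y i / aconv m x i * Real.log (y i / aconv m x i) - y i / aconv m x i + 1) i
          * aconv m x i := by
        rw [IdivR]
        refine Finset.sum_congr rfl fun i _ => ?_
        have h := (hs i).ne'
        field_simp
    _ = ∑ ℓ : Fin (m+1), ∑ j : Fin (m+1),
          (fun i => y i / aconv m x i * Real.log (y i / aconv m x i) - y i / aconv m x i + 1)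
            (idx m ℓ j) * (x ℓ * x j) := key1 m x _
    _ = _ := by
        refine Finset.sum_congr rfl fun ℓ _ => Finset.sum_congr rfl fun j _ => ?_
        simp only
        have hA : (0:ℝ) < x ℓ * x j := mul_pos (hx ℓ) (hx j)
        have hBA : Bfun m y x ℓ j / (x ℓ * x j) = y (idx m ℓ j) / aconv m x (idx m ℓ j) := by
          have h1 := (hx ℓ).ne'
          have h2 := (hx j).ne'
          have h3 := (hs (idx m ℓ j)).ne'
          rw [Bfun]
          field_simp
        rw [hBA, Bfun]
        ring

lemma matlift (m : ℕ) (M N : Fin (2*m+1) → Fin (m+1) → ℝ)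
    (hM : ∀ i j, ¬(j.1 ≤ i.1 ∧ i.1 ≤ j.1 + m) → M i j = 0)
    (hN : ∀ i j, ¬(j.1 ≤ i.1 ∧ i.1 ≤ j.1 + m) → N i j = 0) :
    IdivMR m M N = ∑ ℓ : Fin (m+1), ∑ j : Fin (m+1),
      (M (idx m ℓ j) j * Real.log (M (idx m ℓ j) j / N (idx m ℓ j) j)
        - M (idx m ℓ j) j + N (idx m ℓ j) j) := by
  rw [IdivMR]
  exact band_sum m _ (fun i j h => by rw [hM i j h, hN i j h]; simp)

lemma hAfact (m : ℕ) (y : Fin (2*m+1) → ℝ) (x : Fin (m+1) → ℝ)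
    (hx : ∀ j, 0 < x j) (g : Fin (2*m+1) → ℝ) :
    ∑ ℓ : Fin (m+1), ∑ j : Fin (m+1), g (idx m ℓ j) * Bfun m y x ℓ j = ∑ i, g i * y i := by
  have hs := aconv_pos m x hx
  calc ∑ ℓ : Fin (m+1), ∑ j : Fin (m+1), g (idx m ℓ j) * Bfun m y x ℓ j
      = ∑ ℓ : Fin (m+1), ∑ j : Fin (m+1),
          (fun i => g i * y i / aconv m x i) (idx m ℓ j) * (x ℓ * x j) := by
        refine Finset.sum_congr rfl fun ℓ _ => Finset.sum_congr rfl fun j _ => ?_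
        rw [Bfun]; simp only; ring
    _ = ∑ i, (fun i => g i * y i / aconv m x i) i * aconv m x i := (key1 m x (fun i => g i * y i / aconv m x i)).symm
    _ = ∑ i, g i * y i := by
        refine Finset.sum_congr rfl fun i _ => ?_
        simp only
        rw [div_mul_cancel₀ _ (hs i).ne']

lemma sum2_lin {n : ℕ} (F G H K P Q R : Fin n → Fin n → ℝ)
    (h : ∀ a b, F a b - G a b - H a b - K a b = P a b - Q a b + R a b) :
    (∑ a, ∑ b, F a b) - (∑ a, ∑ b, G a b) - (∑ a, ∑ b, H a b) - (∑ a, ∑ b, K a b)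
      = (∑ a, ∑ b, P a b) - (∑ a, ∑ b, Q a b) + (∑ a, ∑ b, R a b) := by
  simp only [← Finset.sum_sub_distrib, ← Finset.sum_add_distrib]
  exact Finset.sum_congr rfl fun a _ => Finset.sum_congr rfl fun b _ => h a b

lemma core (m : ℕ) (y : Fin (2*m+1) → ℝ) (hy : ∀ i, 0 < y i)
    (x x' : Fin (m+1) → ℝ) (hx : ∀ j, 0 < x j) (hx' : ∀ j, 0 < x' j)
    (hcol : ∀ j, ∑ ℓ : Fin (m+1), Bfun m y x ℓ j = (∑ k, x' k) * x' j) :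
    IdivR y (aconv m x) - IdivR y (aconv m x') =
      IdivMR m (Ystar m y x) (Ystar m y x') + IdivMR m (Wmat m x') (Wmat m x) ∧
    IdivR y (aconv m x') ≤ IdivR y (aconv m x) := by
  have hs := aconv_pos m x hx
  have hs' := aconv_pos m x' hx'
  have hB := Bfun_pos m y x hy hx
  have hB' := Bfun_pos m y x' hy hx'
  have hA : ∀ ℓ j : Fin (m+1), (0:ℝ) < x ℓ * x j := fun ℓ j => mul_pos (hx ℓ) (hx j)
  have hA' : ∀ ℓ j : Fin (m+1), (0:ℝ) < x' ℓ * x' j := fun ℓ j => mul_pos (hx' ℓ) (hx' j)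
  -- the four lifted expressions
  have L1 := lift m y x hy hx
  have L2 := lift m y x' hy hx'
  have L3 : IdivMR m (Ystar m y x) (Ystar m y x') = ∑ ℓ : Fin (m+1), ∑ j : Fin (m+1),
      (Bfun m y x ℓ j * Real.log (Bfun m y x ℓ j / Bfun m y x' ℓ j)
        - Bfun m y x ℓ j + Bfun m y x' ℓ j) := by
    rw [matlift m _ _ (fun i j h => by simp only [Ystar, dif_neg h])
        (fun i j h => by simp only [Ystar, dif_neg h])]
    refine Finset.sum_congr rfl fun ℓ _ => Finset.sum_congr rfl fun j _ => ?_
    rw [Ystar_idx, Ystar_idx, ← Bfun, ← Bfun]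
  have L4 : IdivMR m (Wmat m x') (Wmat m x) = ∑ ℓ : Fin (m+1), ∑ j : Fin (m+1),
      (x' ℓ * x' j * Real.log ((x' ℓ * x' j) / (x ℓ * x j)) - x' ℓ * x' j + x ℓ * x j) := by
    rw [matlift m _ _ (fun i j h => by simp only [Wmat, dif_neg h])
        (fun i j h => by simp only [Wmat, dif_neg h])]
    refine Finset.sum_congr rfl fun ℓ _ => Finset.sum_congr rfl fun j _ => ?_
    rw [Wmat_idx, Wmat_idx]
  -- Fact A
  have FA : (∑ ℓ : Fin (m+1), ∑ j : Fin (m+1),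
        Real.log (y (idx m ℓ j) / aconv m x' (idx m ℓ j)) * Bfun m y x ℓ j)
      = ∑ ℓ : Fin (m+1), ∑ j : Fin (m+1),
        Real.log (y (idx m ℓ j) / aconv m x' (idx m ℓ j)) * Bfun m y x' ℓ j := by
    have h1 := hAfact m y x hx (fun i => Real.log (y i / aconv m x' i))
    have h2 := hAfact m y x' hx' (fun i => Real.log (y i / aconv m x' i))
    rw [h1, h2]
  -- log of B'/A'
  have hlogB' : ∀ ℓ j : Fin (m+1), Real.log (Bfun m y x' ℓ j / (x' ℓ * x' j))
      = Real.log (y (idx m ℓ j) / aconv m x' (idx m ℓ j)) := by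
    intro ℓ j
    congr 1
    have h1 := (hx' ℓ).ne'
    have h2 := (hx' j).ne'
    have h3 := (hs' (idx m ℓ j)).ne'
    rw [Bfun]
    field_simp
  -- Fact B
  have FB : (∑ ℓ : Fin (m+1), ∑ j : Fin (m+1),
      (Bfun m y x ℓ j - x' ℓ * x' j) * (Real.log (x' ℓ * x' j) - Real.log (x ℓ * x j))) = 0 := by
    have step1 : ∀ ℓ j : Fin (m+1),
        (Bfun m y x ℓ j - x' ℓ * x' j) * (Real.log (x' ℓ * x' j) - Real.log (x ℓ * x j))
        = (Bfun m y x ℓ j - x' ℓ * x' j) * (Real.log (x' ℓ) - Real.log (x ℓ))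
          + (Bfun m y x ℓ j - x' ℓ * x' j) * (Real.log (x' j) - Real.log (x j)) := by
      intro ℓ j
      rw [Real.log_mul (hx' ℓ).ne' (hx' j).ne', Real.log_mul (hx ℓ).ne' (hx j).ne']
      ring
    have col0 : ∀ j : Fin (m+1), ∑ ℓ : Fin (m+1), (Bfun m y x ℓ j - x' ℓ * x' j) = 0 := by
      intro j
      rw [Finset.sum_sub_distrib, hcol j, ← Finset.sum_mul]
      ring
    have part2 : (∑ ℓ : Fin (m+1), ∑ j : Fin (m+1),
        (Bfun m y x ℓ j - x' ℓ * x' j) * (Real.log (x' j) - Real.log (x j))) = 0 := by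
      rw [Finset.sum_comm]
      refine Finset.sum_eq_zero fun j _ => ?_
      rw [← Finset.sum_mul, col0 j, zero_mul]
    have part1 : (∑ ℓ : Fin (m+1), ∑ j : Fin (m+1),
        (Bfun m y x ℓ j - x' ℓ * x' j) * (Real.log (x' ℓ) - Real.log (x ℓ))) = 0 := by
      refine Finset.sum_eq_zero fun ℓ _ => ?_
      rw [← Finset.sum_mul]
      have : ∑ j : Fin (m+1), (Bfun m y x ℓ j - x' ℓ * x' j)
          = ∑ j : Fin (m+1), (Bfun m y x j ℓ - x' j * x' ℓ) := by
        refine Finset.sum_congr rfl fun j _ => ?_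
        rw [Bfun_symm]
        ring
      rw [this]
      have : ∑ j : Fin (m+1), (Bfun m y x j ℓ - x' j * x' ℓ) = 0 := by
        rw [Finset.sum_sub_distrib, hcol ℓ, ← Finset.sum_mul]
        ring
      rw [this, zero_mul]
    calc (∑ ℓ : Fin (m+1), ∑ j : Fin (m+1),
          (Bfun m y x ℓ j - x' ℓ * x' j) * (Real.log (x' ℓ * x' j) - Real.log (x ℓ * x j)))
        = (∑ ℓ : Fin (m+1), ∑ j : Fin (m+1),
            ((Bfun m y x ℓ j - x' ℓ * x' j) * (Real.log (x' ℓ) - Real.log (x ℓ))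
              + (Bfun m y x ℓ j - x' ℓ * x' j) * (Real.log (x' j) - Real.log (x j)))) := by
          exact Finset.sum_congr rfl fun ℓ _ => Finset.sum_congr rfl fun j _ => step1 ℓ j
      _ = 0 := by
          simp only [Finset.sum_add_distrib]
          rw [part1, part2, add_zero]
  -- per-term key identity
  have key : ∀ ℓ j : Fin (m+1),
      (Bfun m y x ℓ j * Real.log (Bfun m y x ℓ j / (x ℓ * x j)) - Bfun m y x ℓ j + x ℓ * x j)
      - (Bfun m y x' ℓ j * Real.log (Bfun m y x' ℓ j / (x' ℓ * x' j)) - Bfun m y x' ℓ j + x' ℓ * x' j)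
      - (Bfun m y x ℓ j * Real.log (Bfun m y x ℓ j / Bfun m y x' ℓ j)
          - Bfun m y x ℓ j + Bfun m y x' ℓ j)
      - (x' ℓ * x' j * Real.log ((x' ℓ * x' j) / (x ℓ * x j)) - x' ℓ * x' j + x ℓ * x j)
      = Real.log (y (idx m ℓ j) / aconv m x' (idx m ℓ j)) * Bfun m y x ℓ j
        - Real.log (y (idx m ℓ j) / aconv m x' (idx m ℓ j)) * Bfun m y x' ℓ j
        + (Bfun m y x ℓ j - x' ℓ * x' j) * (Real.log (x' ℓ * x' j) - Real.log (x ℓ * x j)) := by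
    intro ℓ j
    have d1 := Real.log_div (hB ℓ j).ne' (hA ℓ j).ne'
    have d2 := Real.log_div (hB' ℓ j).ne' (hA' ℓ j).ne'
    have d3 := Real.log_div (hB ℓ j).ne' (hB' ℓ j).ne'
    have d4 := Real.log_div (hA' ℓ j).ne' (hA ℓ j).ne'
    have d5 : Real.log (y (idx m ℓ j) / aconv m x' (idx m ℓ j))
        = Real.log (Bfun m y x' ℓ j) - Real.log (x' ℓ * x' j) := by
      rw [← hlogB' ℓ j, d2]
    rw [d1, d2, d3, d4, d5]
    ring
  -- summed identity
  have Esum : (∑ ℓ : Fin (m+1), ∑ j : Fin (m+1),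
        (Bfun m y x ℓ j * Real.log (Bfun m y x ℓ j / (x ℓ * x j)) - Bfun m y x ℓ j + x ℓ * x j))
      - (∑ ℓ : Fin (m+1), ∑ j : Fin (m+1),
        (Bfun m y x' ℓ j * Real.log (Bfun m y x' ℓ j / (x' ℓ * x' j)) - Bfun m y x' ℓ j + x' ℓ * x' j))
      - (∑ ℓ : Fin (m+1), ∑ j : Fin (m+1),
        (Bfun m y x ℓ j * Real.log (Bfun m y x ℓ j / Bfun m y x' ℓ j)
          - Bfun m y x ℓ j + Bfun m y x' ℓ j))
      - (∑ ℓ : Fin (m+1), ∑ j : Fin (m+1),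
        (x' ℓ * x' j * Real.log ((x' ℓ * x' j) / (x ℓ * x j)) - x' ℓ * x' j + x ℓ * x j)) = 0 := by
    rw [sum2_lin _ _ _ _ _ _ _ key]
    rw [FA, FB]
    ring
  have h3 : 0 ≤ ∑ ℓ : Fin (m+1), ∑ j : Fin (m+1),
      (Bfun m y x ℓ j * Real.log (Bfun m y x ℓ j / Bfun m y x' ℓ j)
        - Bfun m y x ℓ j + Bfun m y x' ℓ j) :=
    Finset.sum_nonneg fun ℓ _ => Finset.sum_nonneg fun j _ => klein (hB ℓ j) (hB' ℓ j)
  have h4 : 0 ≤ ∑ ℓ : Fin (m+1), ∑ j : Fin (m+1),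
      (x' ℓ * x' j * Real.log ((x' ℓ * x' j) / (x ℓ * x j)) - x' ℓ * x' j + x ℓ * x j) :=
    Finset.sum_nonneg fun ℓ _ => Finset.sum_nonneg fun j _ => klein (hA' ℓ j) (hA ℓ j)
  constructor
  · rw [L1, L2, L3, L4]
    linarith [Esum]
  · linarith [L1, L2, L3, L4, Esum, h3, h4]

/-- the decrease of the objective in one step of the algorithm:
`I(y‖x*x) − I(y‖x'*x') = I(Y*(x)‖Y*(x')) + I(W(x')‖W(x)) ≥ 0` for `x' = T(x)`. -/
theorem stmt10 (m : ℕ) (y : Fin (2 * m + 1) → ℝ) (hy : ∀ i, 0 < y i)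
    (x : Fin (m + 1) → ℝ) (hx : ∀ j, 0 < x j) :
    IdivR y (aconv m x) - IdivR y (aconv m (Tmap m y x)) =
      IdivMR m (Ystar m y x) (Ystar m y (Tmap m y x)) +
        IdivMR m (Wmat m (Tmap m y x)) (Wmat m x) ∧
    IdivR y (aconv m (Tmap m y x)) ≤ IdivR y (aconv m x) := by
  have hysum : 0 < ∑ i, y i := Finset.sum_pos (fun i _ => hy i) ⟨⟨0, by omega⟩, Finset.mem_univ _⟩
  have hcpos : 0 < Real.sqrt (∑ i, y i) := Real.sqrt_pos.2 hysum
  have hcne := hcpos.ne'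
  have hs := aconv_pos m x hx
  have hx' : ∀ j, 0 < Tmap m y x j := by
    intro j
    rw [Tmap]
    refine mul_pos (mul_pos (hx j) (by positivity)) ?_
    exact Finset.sum_pos (fun ℓ _ => div_pos (mul_pos (hx ℓ) (hy _)) (hs _))
      ⟨⟨0, by omega⟩, Finset.mem_univ _⟩
  have hcolB : ∀ j : Fin (m+1), ∑ ℓ : Fin (m+1), Bfun m y x ℓ j
      = Real.sqrt (∑ i, y i) * Tmap m y x j := by
    intro j
    have e : ∑ ℓ : Fin (m+1), Bfun m y x ℓ j
        = x j * ∑ ℓ : Fin (m+1), x ℓ * y (idx m ℓ j) / aconv m x (idx m ℓ j) := by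
      rw [Finset.mul_sum]
      exact Finset.sum_congr rfl fun ℓ _ => by rw [Bfun]; ring
    rw [e, Tmap]
    field_simp
  have hsumx' : ∑ k, Tmap m y x k = Real.sqrt (∑ i, y i) := by
    have e1 : ∀ j : Fin (m+1), Tmap m y x j = (1 / Real.sqrt (∑ i, y i)) *
        ∑ ℓ : Fin (m+1), (fun i => y i / aconv m x i) (idx m ℓ j) * (x ℓ * x j) := by
      intro j
      rw [Tmap, Finset.mul_sum, Finset.mul_sum]
      refine Finset.sum_congr rfl fun ℓ _ => ?_
      simp only
      ring
    calc ∑ k, Tmap m y x k = (1 / Real.sqrt (∑ i, y i)) *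
          ∑ j : Fin (m+1), ∑ ℓ : Fin (m+1),
            (fun i => y i / aconv m x i) (idx m ℓ j) * (x ℓ * x j) := by
          rw [Finset.mul_sum]
          exact Finset.sum_congr rfl fun j _ => e1 j
      _ = (1 / Real.sqrt (∑ i, y i)) *
          ∑ ℓ : Fin (m+1), ∑ j : Fin (m+1),
            (fun i => y i / aconv m x i) (idx m ℓ j) * (x ℓ * x j) := by
          rw [Finset.sum_comm]
      _ = (1 / Real.sqrt (∑ i, y i)) * ∑ i, (fun i => y i / aconv m x i) i * aconv m x i := by
          rw [key1 m x (fun i => y i / aconv m x i)]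
      _ = (1 / Real.sqrt (∑ i, y i)) * ∑ i, y i := by
          congr 1
          refine Finset.sum_congr rfl fun i _ => ?_
          simp only
          rw [div_mul_cancel₀ _ (hs i).ne']
      _ = Real.sqrt (∑ i, y i) := by
          rw [div_mul_eq_mul_div, one_mul, div_eq_iff hcne, Real.mul_self_sqrt hysum.le]
  have hcol : ∀ j : Fin (m+1), ∑ ℓ : Fin (m+1), Bfun m y x ℓ j
      = (∑ k, Tmap m y x k) * Tmap m y x j := by
    intro j
    rw [hsumx', hcolB]
  exact core m y hy x (Tmap m y x) hx hx' hcol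
end
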